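/- arXiv:2509.20526 — 7 statements merged into one kernel-verified Lean document; each statement's English description precedes it below -/
import Mathlib

section
/- Let q = ⌊n/A⌋ and r = n mod A. For every family x of n strings of length L over an alphabet of size A, the total pairwise overlap satisfies 2·∑_{i<j} O(i,j) ≥ L·((A − r)·q² + r·(q+1)² − n); equivalently, the average pairwise overlap n̄_w = (∑_{i<j} O(i,j))/C(n,2) satisfies n̄_w ≥ (L/(n(n−1)))·((A − r)·q² + r·(q+1)² − n). -/
/-!
At each position `ℓ` the strings colour the `n` indices with `A` letters, and the ordered pairs
`(i, j)` agreeing at `ℓ` number `∑ₐ cₐ²`, where `cₐ` are the colour class sizes with `∑ₐ cₐ = n`.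
Writing `cₐ = q + dₐ` with integers `dₐ`, we get `∑ₐ dₐ = r` and `dₐ ≤ dₐ²`, so this sum is at
least that of the balanced colouring, `(A - r) q² + r (q + 1)²`. Summing over `ℓ` counts every
unordered pair twice and every diagonal pair `L` times.
-/

open Finset

theorem Int.card_mul_sq_add_le_sum_sq {ι : Type*} (s : Finset ι) (f : ι → ℤ) (q r : ℤ)
    (h : ∑ i ∈ s, f i = #s * q + r) : #s * q ^ 2 + 2 * q * r + r ≤ ∑ i ∈ s, f i ^ 2 := by
  have hdev : r ≤ ∑ i ∈ s, (f i - q) ^ 2 := calc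
    r = ∑ i ∈ s, (f i - q) := by rw [sum_sub_distrib, h, sum_const, nsmul_eq_mul]; ring
    _ ≤ ∑ i ∈ s, (f i - q) ^ 2 := sum_le_sum fun i _ => Int.le_self_sq _
  have hexpand :
      ∑ i ∈ s, (f i - q) ^ 2 = ∑ i ∈ s, f i ^ 2 - 2 * q * ∑ i ∈ s, f i + #s * q ^ 2 := by
    simp only [sub_sq, sum_add_distrib, sum_sub_distrib, ← sum_mul, ← mul_sum, sum_const,
      nsmul_eq_mul]
    ring
  rw [hexpand, h] at hdev
  linarith

/-- The number of ordered pairs `(i, j)` with `y i = y j` when `n` points are coloured as evenly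
as possible with `A` colours: `n % A` classes of size `n / A + 1`, the others of size `n / A`. -/
def balancedCoincidences (n A : ℕ) : ℕ := (A - n % A) * (n / A) ^ 2 + n % A * (n / A + 1) ^ 2

theorem balancedCoincidences_le_sum_sq {ι : Type*} {s : Finset ι} (hs : s.Nonempty) (f : ι → ℕ) :
    balancedCoincidences (∑ i ∈ s, f i) #s ≤ ∑ i ∈ s, f i ^ 2 := by
  set n := ∑ i ∈ s, f i
  have hr : n % #s ≤ #s := (Nat.mod_lt n hs.card_pos).le
  have hsum : ∑ i ∈ s, (f i : ℤ) = #s * (n / #s : ℕ) + (n % #s : ℕ) := by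
    exact_mod_cast (Nat.div_add_mod n #s).symm
  have := Int.card_mul_sq_add_le_sum_sq s (fun i => (f i : ℤ)) _ _ hsum
  zify [hr] at this ⊢
  unfold balancedCoincidences
  push_cast [hr]
  linarith

theorem card_coincidences_eq_sum_sq {ι α : Type*} [Fintype ι] [Fintype α] [DecidableEq α]
    (y : ι → α) : #{p : ι × ι | y p.1 = y p.2} = ∑ a, #{i | y i = a} ^ 2 := by
  rw [card_eq_sum_card_fiberwise (f := fun p : ι × ι => y p.1) (t := univ) fun _ _ => mem_univ _]
  refine sum_congr rfl fun a _ => ?_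
  rw [sq, ← card_product, filter_filter]
  congr 1
  ext ⟨i, j⟩
  simp only [mem_filter, mem_univ, true_and, mem_product]
  constructor
  · rintro ⟨hij, rfl⟩; exact ⟨rfl, hij.symm⟩
  · rintro ⟨rfl, hj⟩; exact ⟨hj.symm, rfl⟩

theorem balancedCoincidences_le_card_coincidences {ι α : Type*} [Fintype ι] [Fintype α]
    [Nonempty α] [DecidableEq α] (y : ι → α) :
    balancedCoincidences (Fintype.card ι) (Fintype.card α) ≤ #{p : ι × ι | y p.1 = y p.2} := by
  rw [card_coincidences_eq_sum_sq, Fintype.card,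
    card_eq_sum_card_fiberwise (f := y) (t := univ) fun _ _ => mem_univ _]
  exact balancedCoincidences_le_sum_sq univ_nonempty _

theorem sum_prod_eq_two_nsmul_sum_lt_add_sum_diag {ι M : Type*} [Fintype ι] [LinearOrder ι]
    [AddCommMonoid M] (f : ι → ι → M) (hf : ∀ i j, f i j = f j i) :
    ∑ p : ι × ι, f p.1 p.2 = 2 • ∑ p ∈ {p : ι × ι | p.1 < p.2}, f p.1 p.2 + ∑ i, f i i := by
  have hgt :
      ∑ p ∈ {p : ι × ι | p.2 < p.1}, f p.1 p.2 = ∑ p ∈ {p : ι × ι | p.1 < p.2}, f p.1 p.2 :=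
    sum_nbij' Prod.swap Prod.swap (by simp) (by simp) (by simp) (by simp) fun p _ => hf _ _
  have hge : ∑ p ∈ {p : ι × ι | ¬p.1 < p.2}, f p.1 p.2
      = ∑ p ∈ {p : ι × ι | p.2 < p.1}, f p.1 p.2 + ∑ i, f i i := by
    rw [← sum_filter_add_sum_filter_not _ (fun p : ι × ι => p.2 < p.1), filter_filter,
      filter_filter, ← sum_diag univ (fun p : ι × ι => f p.1 p.2)]
    congr 2
    · ext p; simpa using le_of_lt
    · ext ⟨i, j⟩; simp [diag_eq_filter, le_antisymm_iff, and_comm]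
  rw [← sum_filter_add_sum_filter_not univ (fun p : ι × ι => p.1 < p.2), hge, hgt, two_nsmul,
    add_assoc]

theorem stmt5_general (n L A : ℕ) (hA : 0 < A)
    (q r : ℕ) (hq : q = n / A) (hr : r = n % A)
    (x : Fin n → Fin L → Fin A)
    (O : Fin n → Fin n → ℕ)
    (hO : ∀ i j : Fin n, O i j = (Finset.univ.filter (fun ℓ : Fin L => x i ℓ = x j ℓ)).card) :
    L * ((A - r) * q ^ 2 + r * (q + 1) ^ 2 - n)
      ≤ 2 * ∑ p ∈ Finset.univ.filter (fun p : Fin n × Fin n => p.1 < p.2), O p.1 p.2 ∧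
    (L : ℚ) / ((n : ℚ) * ((n : ℚ) - 1))
        * (((A - r) * q ^ 2 + r * (q + 1) ^ 2 : ℕ) - (n : ℚ))
      ≤ ((∑ p ∈ Finset.univ.filter (fun p : Fin n × Fin n => p.1 < p.2), O p.1 p.2 : ℕ) : ℚ)
          / (n.choose 2 : ℚ) := by
  have : Nonempty (Fin A) := Fin.pos_iff_nonempty.mp hA
  have hK : (A - r) * q ^ 2 + r * (q + 1) ^ 2 = balancedCoincidences n A := by rw [hq, hr]; rfl
  set S := ∑ p ∈ univ.filter (fun p : Fin n × Fin n => p.1 < p.2), O p.1 p.2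
  have hpairs : L * balancedCoincidences n A ≤ 2 * S + n * L := calc
    L * balancedCoincidences n A = ∑ _ℓ : Fin L, balancedCoincidences n A := by simp
    _ ≤ ∑ ℓ : Fin L, #{p : Fin n × Fin n | x p.1 ℓ = x p.2 ℓ} := sum_le_sum fun ℓ _ => by
      simpa using balancedCoincidences_le_card_coincidences fun i => x i ℓ
    _ = ∑ p : Fin n × Fin n, O p.1 p.2 := by simp only [hO, card_filter]; exact sum_comm
    _ = 2 * S + n * L := by
      rw [sum_prod_eq_two_nsmul_sum_lt_add_sum_diag O fun i j => by simp only [hO, eq_comm],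
        smul_eq_mul]
      congr 1
      simp [hO]
  rw [hK]
  refine ⟨by rw [Nat.mul_sub, mul_comm L n]; omega, ?_⟩
  have hdiff : (L : ℚ) * (balancedCoincidences n A - n) ≤ 2 * S := by
    have := (Nat.cast_le (α := ℚ)).mpr hpairs
    push_cast at this
    linarith
  have hden : (0 : ℚ) ≤ n * (n - 1) := by
    have := Nat.cast_choose_two ℚ n
    linarith [(n.choose 2).cast_nonneg (α := ℚ)]
  rw [Nat.cast_choose_two, div_div_eq_mul_div, div_mul_eq_mul_div]
  exact div_le_div_of_nonneg_right (by linarith) hden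

/-- Let `q = ⌊n/A⌋` and `r = n mod A`. For every family `x` of `n ≥ 2`
strings of length `L` over an alphabet of size `A`, the total pairwise overlap satisfies
`2·∑_{i<j} O(i,j) ≥ L·((A − r)·q² + r·(q+1)² − n)`; equivalently, the average pairwise
overlap `n̄_w = (∑_{i<j} O(i,j))/C(n,2)` satisfies
`n̄_w ≥ (L/(n(n−1)))·((A − r)·q² + r·(q+1)² − n)`. -/
theorem stmt5 (n L A : ℕ) (hn : 2 ≤ n) (hL : 0 < L) (hA : 0 < A)
    (q r : ℕ) (hq : q = n / A) (hr : r = n % A)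
    (x : Fin n → Fin L → Fin A)
    (O : Fin n → Fin n → ℕ)
    (hO : ∀ i j : Fin n, O i j = (Finset.univ.filter (fun ℓ : Fin L => x i ℓ = x j ℓ)).card) :
    L * ((A - r) * q ^ 2 + r * (q + 1) ^ 2 - n)
      ≤ 2 * ∑ p ∈ Finset.univ.filter (fun p : Fin n × Fin n => p.1 < p.2), O p.1 p.2 ∧
    (L : ℚ) / ((n : ℚ) * ((n : ℚ) - 1))
        * (((A - r) * q ^ 2 + r * (q + 1) ^ 2 : ℕ) - (n : ℚ))
      ≤ ((∑ p ∈ Finset.univ.filter (fun p : Fin n × Fin n => p.1 < p.2), O p.1 p.2 : ℕ) : ℚ)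
          / (n.choose 2 : ℚ) :=
  stmt5_general n L A hA q r hq hr x O hO
end

section
/- For natural numbers N, m, s with 1 ≤ m, 1 ≤ s and m + s ≤ N − 1, one has ∑_{d=m+s}^{N−1} (N − d)·C(d − m − 1, s − 1) = (N − m)·C(N − 1 − m, s) − s·C(N − m, s + 1). -/
/-!
Substituting `d = k + m + 1` and `M = N - m - 2` turns the sum into
`∑_{k=s-1}^{M} (M + 1 - k) C(k, s-1)`. Raising `M` by one adds the hockey-stick sum
`∑_{k ≤ M+1} C(k, s-1) = C(M + 2, s)`, so by Pascal's rule the sum is `C(M + 2, s + 1) = C(N - m, s + 1)`.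
The right-hand side is the same binomial coefficient because `(n + 1) C(n, s) = (s + 1) C(n + 1, s + 1)`.
-/

open Finset

theorem Nat.sum_Icc_succ_sub_mul_choose (t M : ℕ) :
    ∑ k ∈ Icc t M, (M + 1 - k) * k.choose t = (M + 2).choose (t + 2) := by
  induction M with
  | zero => rcases t with _ | t <;> simp [Nat.choose_eq_zero_of_lt]
  | succ M ih =>
    calc ∑ k ∈ Icc t (M + 1), (M + 1 + 1 - k) * k.choose t
        = ∑ k ∈ Icc t (M + 1), ((M + 1 - k) * k.choose t + k.choose t) := by
          refine sum_congr rfl fun k hk => ?_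
          rw [Nat.sub_add_comm (mem_Icc.mp hk).2]
          ring
      _ = ∑ k ∈ Icc t M, (M + 1 - k) * k.choose t + (M + 2).choose (t + 1) := by
          rw [sum_add_distrib, sum_Icc_choose]
          rcases le_or_gt t (M + 1) with htM | htM
          · rw [sum_Icc_succ_top htM, Nat.sub_self, zero_mul, add_zero]
          · rw [Icc_eq_empty_of_lt htM, Icc_eq_empty_of_lt (by omega)]
      _ = (M + 1 + 2).choose (t + 2) := by
          rw [ih, Nat.choose_succ_succ' (M + 2), add_comm]

theorem cast_succ_mul_choose_sub_mul_choose_succ (n k : ℕ) :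
    ((n + 1 : ℕ) : ℤ) * n.choose k - k * (n + 1).choose (k + 1) = (n + 1).choose (k + 1) := by
  have h : ((n + 1 : ℕ) : ℤ) * n.choose k = (n + 1).choose (k + 1) * (k + 1 : ℕ) := by
    exact_mod_cast Nat.add_one_mul_choose_eq n k
  push_cast at h ⊢
  linear_combination h

theorem sum_Icc_sub_mul_choose_eq_choose (N m s : ℕ) (hs : 1 ≤ s) (h : m + s ≤ N - 1) :
    ∑ d ∈ Icc (m + s) (N - 1), ((N : ℤ) - d) * ((d - m - 1).choose (s - 1) : ℤ)
      = (N - m).choose (s + 1) := by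
  obtain ⟨t, rfl⟩ : ∃ t, s = t + 1 := ⟨s - 1, by omega⟩
  obtain ⟨M, rfl⟩ : ∃ M, N = M + m + 2 := ⟨N - m - 2, by omega⟩
  have hIcc : Icc (m + (t + 1)) (M + m + 2 - 1) = (Icc t M).map (addRightEmbedding (m + 1)) := by
    rw [map_add_right_Icc]
    congr 1
    omega
  rw [hIcc, sum_map, show M + m + 2 - m = M + 2 by omega, ← Nat.sum_Icc_succ_sub_mul_choose]
  push_cast
  refine sum_congr rfl fun k hk => ?_
  rw [addRightEmbedding_apply, show k + (m + 1) - m - 1 = k by omega,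
    Nat.cast_sub (by have := (mem_Icc.mp hk).2; omega)]
  push_cast
  ring

theorem stmt7_general (N m s : ℕ) (hs : 1 ≤ s) (h : m + s ≤ N - 1) :
    ∑ d ∈ Finset.Icc (m + s) (N - 1), ((N : ℤ) - (d : ℤ)) * ((d - m - 1).choose (s - 1) : ℤ)
      = ((N - m : ℕ) : ℤ) * ((N - 1 - m).choose s : ℤ)
          - (s : ℤ) * ((N - m).choose (s + 1) : ℤ) := by
  have hNm : N - m = N - 1 - m + 1 := by omega
  rw [sum_Icc_sub_mul_choose_eq_choose N m s hs h, hNm, cast_succ_mul_choose_sub_mul_choose_succ]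

/-- For natural numbers `N, m, s` with `1 ≤ m`, `1 ≤ s`, `m + s ≤ N − 1`:
`∑_{d=m+s}^{N−1} (N − d)·C(d − m − 1, s − 1) = (N − m)·C(N − 1 − m, s) − s·C(N − m, s + 1)`. -/
theorem stmt7 (N m s : ℕ) (hm : 1 ≤ m) (hs : 1 ≤ s) (h : m + s ≤ N - 1) :
    ∑ d ∈ Finset.Icc (m + s) (N - 1), ((N : ℤ) - (d : ℤ)) * ((d - m - 1).choose (s - 1) : ℤ)
      = ((N - m : ℕ) : ℤ) * ((N - 1 - m).choose s : ℤ)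
          - (s : ℤ) * ((N - m).choose (s + 1) : ℤ) :=
  stmt7_general N m s hs h
end

section
/- In the ring of formal power series ℝ[[X]], let F = X + ρ·X²·(1 − X)⁻¹ (i.e. F = X + ρ·∑_{q≥2} X^q). Then for every m ≥ 1: the coefficient of X^m in F^m equals 1, and for every d > m the coefficient of X^d in F^m equals ∑_{s=1}^{min(m, d−m)} C(m, s)·ρ^s·C(d − m − 1, s − 1). -/
/-!
Write `F = X * (1 + ρ Y)` with `Y = X / (1 - X)`. Then `F ^ m = X ^ m * (1 + ρ Y) ^ m`, and the
binomial theorem reduces everything to the coefficients of `Y ^ s = X ^ s * (1 - X)⁻¹ ^ s`, which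
are the binomial coefficients `[X ^ (n + 1)] Y ^ (s + 1) = C(n, s)` (compositions of `n + 1` into
`s + 1` parts).
-/

open PowerSeries Finset

namespace PowerSeries

variable {k : Type*} [Field k]

theorem inv_one_sub_X_pow (s : ℕ) :
    (1 - X : k⟦X⟧)⁻¹ ^ s = (invOneSubPow k s).val := by
  have h1 : (1 - X : k⟦X⟧)⁻¹ = (invOneSubPow k 1).val := by
    rw [inv_eq_iff_mul_eq_one (by simp), ← pow_one (1 - X : k⟦X⟧),
      ← invOneSubPow_inv_eq_one_sub_pow]
    exact (invOneSubPow k 1).val_inv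
  rw [h1, ← Units.val_pow_eq_pow_val, invOneSubPow_eq_inv_one_sub_pow,
    invOneSubPow_eq_inv_one_sub_pow, pow_one]

theorem coeff_succ_X_mul_inv_one_sub_X_pow_succ (n s : ℕ) :
    coeff (n + 1) ((X * (1 - X : k⟦X⟧)⁻¹) ^ (s + 1)) = (n.choose s : k) := by
  rw [mul_pow, inv_one_sub_X_pow, invOneSubPow_val_succ_eq_mk_add_choose,
    coeff_X_pow_mul', coeff_mk]
  by_cases hsn : s ≤ n
  · rw [if_pos (by omega), show s + (n + 1 - (s + 1)) = n by omega]
  · rw [if_neg (by omega), Nat.choose_eq_zero_of_lt (by omega), Nat.cast_zero]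

theorem coeff_succ_one_add_C_mul_X_mul_inv_one_sub_X_pow (a : k) (m n : ℕ) :
    coeff (n + 1) ((1 + C a * (X * (1 - X : k⟦X⟧)⁻¹)) ^ m) =
      ∑ s ∈ Icc 1 m, (m.choose s : k) * a ^ s * (n.choose (s - 1) : k) := by
  rw [add_comm 1, add_pow, map_sum, range_eq_Ico, sum_eq_sum_Ico_succ_bot (by omega),
    Ico_add_one_right_eq_Icc]
  simp only [pow_zero, one_pow, mul_one, Nat.choose_zero_right, Nat.cast_one,
    coeff_one, Nat.succ_ne_zero, if_false, zero_add]
  refine sum_congr rfl fun s hs => ?_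
  obtain ⟨t, rfl⟩ : ∃ t, s = t + 1 := Nat.exists_eq_add_of_le' (mem_Icc.mp hs).1
  rw [← map_natCast (C (R := k)), mul_comm, mul_pow, ← mul_assoc, ← map_pow, ← map_mul,
    coeff_C_mul, coeff_succ_X_mul_inv_one_sub_X_pow_succ, Nat.add_sub_cancel]

end PowerSeries

theorem stmt12_general (ρ : ℝ) (F : PowerSeries ℝ)
    (hF : F = PowerSeries.X + PowerSeries.C ρ * PowerSeries.X ^ 2 *
      (1 - PowerSeries.X)⁻¹)
    (m : ℕ) :
    PowerSeries.coeff m (F ^ m) = 1 ∧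
    ∀ d : ℕ, m < d →
      PowerSeries.coeff d (F ^ m)
        = ∑ s ∈ Finset.Icc 1 (min m (d - m)),
            (m.choose s : ℝ) * ρ ^ s * ((d - m - 1).choose (s - 1) : ℝ) := by
  have hF' : F ^ m = X ^ m * (1 + C ρ * (X * (1 - X)⁻¹)) ^ m := by
    rw [hF, ← mul_pow]; ring
  refine ⟨by simp [hF', coeff_X_pow_mul'], fun d hd => ?_⟩
  obtain ⟨n, rfl⟩ : ∃ n, d = m + (n + 1) := ⟨d - m - 1, by omega⟩
  rw [hF', coeff_X_pow_mul', if_pos (by omega), Nat.add_sub_cancel_left,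
    coeff_succ_one_add_C_mul_X_mul_inv_one_sub_X_pow, Nat.add_sub_cancel]
  refine (sum_subset (Icc_subset_Icc_right (min_le_left _ _)) fun s hs hs' => ?_).symm
  have hns : n < s - 1 := by simp only [mem_Icc] at hs hs'; omega
  rw [Nat.choose_eq_zero_of_lt hns, Nat.cast_zero, mul_zero]

/-- In `ℝ[[X]]`, let `F = X + ρ·X²·(1 − X)⁻¹`. Then for `m ≥ 1`:
the coefficient of `X^m` in `F^m` equals `1`, and for `d > m` the coefficient of `X^d`
in `F^m` equals `∑_{s=1}^{min(m, d−m)} C(m, s)·ρ^s·C(d − m − 1, s − 1)`. -/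
theorem stmt12 (ρ : ℝ) (F : PowerSeries ℝ)
    (hF : F = PowerSeries.X + PowerSeries.C ρ * PowerSeries.X ^ 2 *
      (1 - PowerSeries.X)⁻¹)
    (m : ℕ) (hm : 1 ≤ m) :
    PowerSeries.coeff m (F ^ m) = 1 ∧
    ∀ d : ℕ, m < d →
      PowerSeries.coeff d (F ^ m)
        = ∑ s ∈ Finset.Icc 1 (min m (d - m)),
            (m.choose s : ℝ) * ρ ^ s * ((d - m - 1).choose (s - 1) : ℝ) :=
  stmt12_general ρ F hF m
end

section
/- For every ρ ∈ ℝ and every m with 1 ≤ m ≤ N − 1, the sum of all entries of A(ρ)^m satisfies g_m = ∑_{s=0}^{m} C(m, s)·ρ^s·C(N − m, s + 1). -/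
/-!
`A(ρ)` is the upper triangular Toeplitz matrix of the power series `a = X + ρ X² / (1 - X)`, and
upper triangular Toeplitz matrices multiply like power series truncated at `X ^ N`, so `A(ρ)^m`
is the Toeplitz matrix of `a ^ m = X ^ m (1 + ρ X / (1 - X)) ^ m`. The entries of the Toeplitz
matrix of `f` add up to `[X ^ N] X f / (1 - X)²`, and after the binomial expansion of `a ^ m`
each term contributes `C(m, s) ρ ^ s [X ^ N] X ^ (m + 1 + s) / (1 - X) ^ (s + 2)
= C(m, s) ρ ^ s C(N - m, s + 1)`. (`mk 1` is `1 / (1 - X)`.)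
-/

namespace PowerSeries

open Finset

section Semiring

variable {R : Type*} [Semiring R]

theorem sum_range_ite_coeff_mul_ite_coeff (p q : R⟦X⟧) {N i j : ℕ} (hj : j < N) :
    ∑ k ∈ range N, (if i ≤ k then coeff (k - i) p else 0) * (if k ≤ j then coeff (j - k) q else 0)
      = if i ≤ j then coeff (j - i) (p * q) else 0 := by
  simp_rw [ite_zero_mul_ite_zero]
  rw [← sum_filter, show (range N).filter (fun k => i ≤ k ∧ k ≤ j) = Ico i (j + 1) by
    ext k; simp only [mem_filter, mem_range, mem_Ico]; omega, sum_Ico_eq_sum_range]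
  split_ifs with hij
  · rw [coeff_mul, Nat.sum_antidiagonal_eq_sum_range_succ (fun a b => coeff a p * coeff b q),
      show j + 1 - i = (j - i).succ by omega]
    refine sum_congr rfl fun t _ => ?_
    rw [Nat.add_sub_cancel_left, Nat.sub_sub]
  · rw [show j + 1 - i = 0 by omega, range_zero, sum_empty]

variable (N : ℕ)

/-- Multiplication by `p` on `R⟦X⟧ ⧸ (X ^ N)`, as a matrix acting on row vectors in the basis
`1, X, …, X ^ (N - 1)`. -/
noncomputable def upperToeplitz : R⟦X⟧ →+* Matrix (Fin N) (Fin N) R where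
  toFun p := Matrix.of fun i j => if (i : ℕ) ≤ j then coeff (j - i : ℕ) p else 0
  map_one' := by
    ext i j
    simp only [Matrix.of_apply, coeff_one, Matrix.one_apply]
    split_ifs <;> first | rfl | omega
  map_mul' p q := by
    ext i j
    rw [Matrix.mul_apply, Matrix.of_apply, ← sum_range_ite_coeff_mul_ite_coeff p q j.isLt,
      ← Fin.sum_univ_eq_sum_range]
    rfl
  map_zero' := by ext; simp
  map_add' p q := by ext; simp only [map_add, Matrix.of_apply, Matrix.add_apply]; split_ifs <;> simp

theorem upperToeplitz_apply (p : R⟦X⟧) (i j : Fin N) :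
    upperToeplitz N p i j = if (i : ℕ) ≤ j then coeff (j - i : ℕ) p else 0 := rfl

theorem coeff_mk_one_mul (f : R⟦X⟧) (n : ℕ) :
    coeff n (mk 1 * f) = ∑ k ∈ range (n + 1), coeff (n - k) f := by
  rw [coeff_mul, Nat.sum_antidiagonal_eq_sum_range_succ (fun a b => coeff a (mk 1) * coeff b f)]
  simp

theorem coeff_X_mul_mk_one_mul (f : R⟦X⟧) (n : ℕ) :
    coeff n (X * mk 1 * f) = ∑ k ∈ range n, coeff k f := by
  induction n with
  | zero => simp [mul_assoc]
  | succ n ih =>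
    have hmk : (mk 1 : R⟦X⟧) = 1 + X * mk 1 := by
      ext (_ | n) <;> simp [coeff_succ_X_mul]
    rw [sum_range_succ, ← ih, mul_assoc, coeff_succ_X_mul]
    nth_rw 1 [hmk]
    rw [add_mul, one_mul, map_add, add_comm, mul_assoc]

theorem sum_upperToeplitz_apply (p : R⟦X⟧) :
    ∑ i, ∑ j, upperToeplitz N p i j = coeff N (X * mk 1 * (mk 1 * p)) := by
  have hcol (j : Fin N) :
      ∑ i : Fin N, (if (i : ℕ) ≤ j then coeff (j - i : ℕ) p else 0) = coeff j (mk 1 * p) := by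
    rw [coeff_mk_one_mul, Fin.sum_univ_eq_sum_range (fun i => if i ≤ j then coeff (j - i) p else 0),
      ← sum_filter, show (range N).filter (· ≤ (j : ℕ)) = range (j + 1) by
        ext; simp only [mem_filter, mem_range]; omega]
  simp only [upperToeplitz_apply]
  rw [sum_comm, coeff_X_mul_mk_one_mul, Fintype.sum_congr _ _ hcol,
    Fin.sum_univ_eq_sum_range (fun j => coeff j (mk 1 * p))]

end Semiring

theorem coeff_X_pow_mul_mk_one_pow {S : Type*} [CommRing S] (n k d : ℕ) :
    coeff n (X ^ k * (mk 1 : S⟦X⟧) ^ (d + 2)) = ((n + d + 1 - k).choose (d + 1) : S) := by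
  rw [coeff_X_pow_mul', mk_one_pow_eq_mk_choose_add]
  split_ifs with h
  · rw [coeff_mk, show d + 1 + (n - k) = n + d + 1 - k by omega]
  · rw [Nat.choose_eq_zero_of_lt (by omega), Nat.cast_zero]

end PowerSeries

open PowerSeries

theorem stmt13_general (N : ℕ) (ρ : ℝ)
    (Amat : Matrix (Fin N) (Fin N) ℝ)
    (hAmat : ∀ i j : Fin N, Amat i j =
      if (j : ℕ) = (i : ℕ) + 1 then 1 else if (i : ℕ) + 2 ≤ (j : ℕ) then ρ else 0)
    (m : ℕ) :
    ∑ i : Fin N, ∑ j : Fin N, (Amat ^ m) i j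
      = ∑ s ∈ Finset.range (m + 1),
          (m.choose s : ℝ) * ρ ^ s * ((N - m).choose (s + 1) : ℝ) := by
  have hA : Amat = upperToeplitz N (X + C ρ * (X ^ 2 * mk 1)) := by
    ext i j
    rw [hAmat, upperToeplitz_apply]
    simp only [map_add, coeff_X, coeff_C_mul, coeff_X_pow_mul', coeff_mk, Pi.one_apply]
    split_ifs <;> first | omega | simp
  have hgen : X * mk 1 * (mk 1 * (X + C ρ * (X ^ 2 * mk 1)) ^ m) = ∑ s ∈ Finset.range (m + 1),
      C ((m.choose s : ℝ) * ρ ^ s) * (X ^ (m + 1 + s) * mk 1 ^ (s + 2)) := by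
    rw [show X + C ρ * (X ^ 2 * mk 1) = X * (C ρ * X * mk 1 + 1) by ring, mul_pow, add_pow,
      Finset.mul_sum, Finset.mul_sum, Finset.mul_sum]
    refine Finset.sum_congr rfl fun s _ => ?_
    simp only [map_mul, map_pow, map_natCast]
    ring
  rw [hA, ← map_pow, sum_upperToeplitz_apply, hgen, map_sum]
  refine Finset.sum_congr rfl fun s _ => ?_
  rw [coeff_C_mul, coeff_X_pow_mul_mk_one_pow, show N + s + 1 - (m + 1 + s) = N - m by omega]

/-- For every `ρ ∈ ℝ` and `1 ≤ m ≤ N − 1`, the sum of all entries of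
`A(ρ)^m` satisfies `g_m = ∑_{s=0}^{m} C(m, s)·ρ^s·C(N − m, s + 1)`. -/
theorem stmt13 (N : ℕ) (hN : 0 < N) (ρ : ℝ)
    (Amat : Matrix (Fin N) (Fin N) ℝ)
    (hAmat : ∀ i j : Fin N, Amat i j =
      if (j : ℕ) = (i : ℕ) + 1 then 1 else if (i : ℕ) + 2 ≤ (j : ℕ) then ρ else 0)
    (m : ℕ) (hm : 1 ≤ m) (hmN : m ≤ N - 1) :
    ∑ i : Fin N, ∑ j : Fin N, (Amat ^ m) i j
      = ∑ s ∈ Finset.range (m + 1),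
          (m.choose s : ℝ) * ρ ^ s * ((N - m).choose (s + 1) : ℝ) :=
  stmt13_general N ρ Amat hAmat m
end

section
/- Let R be a commutative ring, A an N×N matrix over R, γ ∈ R, B = γ·𝟙𝟙ᵀ + (1−γ)·I, and for k ≥ 1 set S_k := 𝟙ᵀ (A·B)^{k−1} A 𝟙 and g_m := 𝟙ᵀ A^m 𝟙. Then for every k ≥ 1: S_k = ∑_{p=1}^{k} γ^{p−1}·(1−γ)^{k−p} · ∑_{(m_1,…,m_p)} ∏_{i=1}^{p} g_{m_i}, where the inner sum ranges over all compositions of k into p positive parts, i.e. tuples (m_1,…,m_p) with each m_i ≥ 1 and m_1 + ⋯ + m_p = k. -/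
/-!
Put `J = 𝟙𝟙ᵀ`, `α = γ`, `β = 1 - γ`, so that `A * B = β • A + α • (A * J)`. Expanding
`(β • A + α • (A * J)) ^ (n + 1)` according to the first factor `α • (A * J)` and using
`𝟙ᵀ (P * J * Q) 𝟙 = (𝟙ᵀ P 𝟙) (𝟙ᵀ Q 𝟙)` gives the recurrence
`S (n + 2) = β ^ (n + 1) * g (n + 2) + ∑_{i + j = n} α * β ^ i * g (i + 1) * S (j + 1)`,
with `S 1 = g 1`. Splitting off the first part of a composition shows that the right-hand side
satisfies the same recurrence with the same initial value.
-/

open Finset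

namespace Finset.Nat

theorem sum_antidiagonalTuple_succ {M : Type*} [AddCommMonoid M] (p n : ℕ)
    (f : (Fin (p + 1) → ℕ) → M) :
    ∑ x ∈ antidiagonalTuple (p + 1) n, f x =
      ∑ ab ∈ antidiagonal n, ∑ y ∈ antidiagonalTuple p ab.2, f (Fin.cons ab.1 y) := by
  rw [sum_sigma']
  refine sum_nbij' (fun x => ⟨(x 0, n - x 0), Fin.tail x⟩) (fun y => Fin.cons y.1.1 y.2)
    (fun x hx => ?_) (fun ⟨⟨a, b⟩, y⟩ hy => ?_) (fun x _ => by simp) (fun ⟨⟨a, b⟩, y⟩ hy => ?_)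
    (fun x _ => by simp)
  · rw [mem_antidiagonalTuple, Fin.sum_univ_succ] at hx
    rw [mem_sigma, HasAntidiagonal.mem_antidiagonal, mem_antidiagonalTuple]
    dsimp only [Fin.tail]
    omega
  · rw [mem_sigma, HasAntidiagonal.mem_antidiagonal, mem_antidiagonalTuple] at hy
    rw [mem_antidiagonalTuple, Fin.sum_univ_succ]
    simp [← hy.1, hy.2]
  · rw [mem_sigma, HasAntidiagonal.mem_antidiagonal] at hy
    simp [← hy.1]

theorem sum_antidiagonal_sum_antidiagonal_snd {M : Type*} [AddCommMonoid M] (n : ℕ)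
    (f : ℕ → ℕ → ℕ → M) :
    ∑ ab ∈ antidiagonal n, ∑ ij ∈ antidiagonal ab.2, f ab.1 ij.1 ij.2 =
      ∑ il ∈ antidiagonal n, ∑ aj ∈ antidiagonal il.2, f aj.1 il.1 aj.2 := by
  simp only [sum_sigma']
  apply sum_nbij' (fun x ↦ ⟨(x.2.1, x.1.1 + x.2.2), (x.1.1, x.2.2)⟩)
    (fun x ↦ ⟨(x.2.1, x.1.1 + x.2.2), (x.1.1, x.2.2)⟩) <;>
    aesop (add simp [add_assoc, add_left_comm])

theorem sum_filter_one_le_antidiagonalTuple {M : Type*} [AddCommMonoid M] (p n : ℕ)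
    (f : (Fin p → ℕ) → M) :
    ∑ m ∈ (antidiagonalTuple p (n + p)).filter (fun m => ∀ i, 1 ≤ m i), f m =
      ∑ x ∈ antidiagonalTuple p n, f (x + 1) := by
  have hinv (m : Fin p → ℕ) (hm : ∀ i, 1 ≤ m i) : m - 1 + 1 = m := by
    funext i
    have := hm i
    simp only [Pi.add_apply, Pi.sub_apply, Pi.one_apply]
    omega
  refine sum_nbij' (fun m => m - 1) (fun x => x + 1) (fun m hm => ?_) (fun x hx => ?_)
    (fun m hm => hinv m (mem_filter.1 hm).2) (fun x _ => by simp)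
    (fun m hm => by rw [hinv m (mem_filter.1 hm).2])
  · obtain ⟨hsum, hpos⟩ := mem_filter.1 hm
    rw [mem_antidiagonalTuple] at hsum ⊢
    simp only [Pi.sub_apply, Pi.one_apply]
    rw [sum_tsub_distrib _ fun i _ => hpos i, hsum]
    simp
  · rw [mem_antidiagonalTuple] at hx
    simp [mem_antidiagonalTuple, sum_add_distrib, hx]

end Finset.Nat

open Finset.Nat

theorem add_pow_succ_eq_pow_add_sum_antidiagonal {α : Type*} [Semiring α] (y d : α) (n : ℕ) :
    (y + d) ^ (n + 1) = y ^ (n + 1) + ∑ ij ∈ antidiagonal n, y ^ ij.1 * d * (y + d) ^ ij.2 := by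
  induction n with
  | zero => simp
  | succ n ih =>
    calc (y + d) ^ (n + 2) = y * (y + d) ^ (n + 1) + d * (y + d) ^ (n + 1) := by
          rw [pow_succ' _ (n + 1), add_mul]
      _ = y * (y ^ (n + 1) + ∑ ij ∈ antidiagonal n, y ^ ij.1 * d * (y + d) ^ ij.2)
          + d * (y + d) ^ (n + 1) := by rw [← ih]
      _ = _ := by
          rw [Nat.sum_antidiagonal_succ, mul_add, mul_sum]
          simp only [pow_succ' y, pow_zero, one_mul, mul_assoc]
          abel

theorem eq_of_antidiagonal_recurrence {R : Type*} [Mul R] [AddCommMonoid R] {s t : ℕ → R}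
    (a w : ℕ → R) (h0 : s 0 = t 0)
    (hs : ∀ n, s (n + 1) = a n + ∑ ij ∈ antidiagonal n, w ij.1 * s ij.2)
    (ht : ∀ n, t (n + 1) = a n + ∑ ij ∈ antidiagonal n, w ij.1 * t ij.2) : s = t := by
  funext n
  induction n using Nat.strong_induction_on with
  | _ n ih =>
    rcases n with _ | n
    · exact h0
    · rw [hs, ht]
      refine congrArg _ (sum_congr rfl fun ij hij => ?_)
      rw [ih ij.2 (Nat.antidiagonal.snd_lt hij)]

section Compositions

variable {R : Type*} [CommSemiring R]

/-- The coefficient of `X ^ n` in `(∑ m, c m * X ^ m) ^ p`. -/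
def tupleProdSum (c : ℕ → R) (p n : ℕ) : R :=
  ∑ x ∈ antidiagonalTuple p n, ∏ i, c (x i)

@[simp]
theorem tupleProdSum_one (c : ℕ → R) (n : ℕ) : tupleProdSum c 1 n = c n := by
  simp [tupleProdSum]

theorem tupleProdSum_succ (c : ℕ → R) (p n : ℕ) :
    tupleProdSum c (p + 1) n = ∑ ab ∈ antidiagonal n, c ab.1 * tupleProdSum c p ab.2 := by
  simp only [tupleProdSum, sum_antidiagonalTuple_succ, Fin.prod_univ_succ, Fin.cons_zero,
    Fin.cons_succ, mul_sum]

/-- With `c m = g (m + 1)`, the summand `(a, b)` is the summand `p = a + 1` of the right-hand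
side of the theorem for `k = n + 1`, each part of a composition lowered by one. -/
def weightedCompositionSum (α β : R) (c : ℕ → R) (n : ℕ) : R :=
  ∑ ab ∈ antidiagonal n, α ^ ab.1 * β ^ ab.2 * tupleProdSum c (ab.1 + 1) ab.2

theorem weightedCompositionSum_zero (α β : R) (c : ℕ → R) :
    weightedCompositionSum α β c 0 = c 0 := by
  simp [weightedCompositionSum]

theorem weightedCompositionSum_succ (α β : R) (c : ℕ → R) (n : ℕ) :
    weightedCompositionSum α β c (n + 1) = β ^ (n + 1) * c (n + 1) +
      ∑ ij ∈ antidiagonal n, α * β ^ ij.1 * c ij.1 * weightedCompositionSum α β c ij.2 := by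
  have hsplit : ∀ ab ∈ antidiagonal n,
      α ^ (ab.1 + 1) * β ^ ab.2 * tupleProdSum c (ab.1 + 1 + 1) ab.2 =
        ∑ ij ∈ antidiagonal ab.2,
          α ^ (ab.1 + 1) * β ^ ij.1 * β ^ ij.2 * c ij.1 * tupleProdSum c (ab.1 + 1) ij.2 := by
    intro ab _
    rw [tupleProdSum_succ, mul_sum]
    refine sum_congr rfl fun ij hij => ?_
    rw [← mem_antidiagonal.1 hij, pow_add]
    ring
  rw [weightedCompositionSum, Nat.sum_antidiagonal_succ, sum_congr rfl hsplit,
    sum_antidiagonal_sum_antidiagonal_snd n fun a i j =>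
      α ^ (a + 1) * β ^ i * β ^ j * c i * tupleProdSum c (a + 1) j]
  simp only [weightedCompositionSum, mul_sum, pow_zero, one_mul, zero_add, tupleProdSum_one]
  exact congrArg _ (sum_congr rfl fun _ _ => sum_congr rfl fun _ _ => by ring)

theorem weightedCompositionSum_eq_sum_compositions (α β : R) (g : ℕ → R) (n : ℕ) :
    weightedCompositionSum α β (fun m => g (m + 1)) n =
      ∑ p ∈ Icc 1 (n + 1), α ^ (p - 1) * β ^ (n + 1 - p) *
        ∑ m ∈ (antidiagonalTuple p (n + 1)).filter (fun m => ∀ i, 1 ≤ m i), ∏ i, g (m i) := by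
  have hIcc : Icc 1 (n + 1) = (range (n + 1)).map (addRightEmbedding 1) := by
    rw [Nat.range_succ_eq_Icc_zero, map_add_right_Icc, zero_add]
  rw [hIcc, sum_map, weightedCompositionSum, Nat.sum_antidiagonal_eq_sum_range_succ_mk]
  refine sum_congr rfl fun a ha => ?_
  have hn : n + 1 = n - a + (a + 1) := by have := mem_range.1 ha; omega
  rw [addRightEmbedding_apply, hn, sum_filter_one_le_antidiagonalTuple, tupleProdSum]
  simp

end Compositions

namespace Matrix

variable {l m n o : Type*} [Fintype l] [Fintype m] [Fintype n] [Fintype o]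
  {R : Type*} [CommSemiring R]

def entrySum : Matrix m n R →ₗ[R] R where
  toFun M := ∑ i, ∑ j, M i j
  map_add' M M' := by simp [sum_add_distrib]
  map_smul' r M := by simp [mul_sum]

theorem entrySum_apply (M : Matrix m n R) : entrySum M = ∑ i, ∑ j, M i j := rfl

theorem entrySum_mul_of_one_mul (P : Matrix l m R) (Q : Matrix n o R) :
    entrySum (P * (of fun _ _ => 1 : Matrix m n R) * Q) = entrySum P * entrySum Q := by
  have hentry : ∀ i j, (P * (of fun _ _ => 1 : Matrix m n R) * Q) i j =
      (∑ a, P i a) * ∑ b, Q b j := by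
    simp [mul_apply, sum_mul, mul_sum]
  simp only [entrySum_apply, hentry, ← sum_mul_sum]
  rw [sum_comm (s := univ (α := o))]

theorem entrySum_mul_pow_succ_mul [DecidableEq n] (A : Matrix n n R) (α β : R) (k : ℕ) :
    entrySum ((A * (α • of (fun _ _ => 1) + β • 1)) ^ (k + 1) * A) =
      β ^ (k + 1) * entrySum (A ^ (k + 2)) + ∑ ij ∈ antidiagonal k, α * β ^ ij.1 *
        entrySum (A ^ (ij.1 + 1)) * entrySum ((A * (α • of (fun _ _ => 1) + β • 1)) ^ ij.2 * A) := by
  have hX : A * (α • of (fun _ _ => 1) + β • 1) = β • A + α • (A * of fun _ _ => 1) := by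
    rw [mul_add, Matrix.mul_smul, Matrix.mul_smul, mul_one, add_comm]
  rw [hX, add_pow_succ_eq_pow_add_sum_antidiagonal, add_mul, map_add, sum_mul, map_sum, smul_pow,
    smul_mul_assoc, map_smul, ← pow_succ, smul_eq_mul]
  refine congrArg _ (sum_congr rfl fun ij _ => ?_)
  have hterm : (β • A) ^ ij.1 * (α • (A * of fun _ _ => 1)) *
      (β • A + α • (A * of fun _ _ => 1)) ^ ij.2 * A =
      (α * β ^ ij.1) • (A ^ (ij.1 + 1) * (of fun _ _ => 1 : Matrix n n R) *
        ((β • A + α • (A * of fun _ _ => 1)) ^ ij.2 * A)) := by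
    simp only [smul_pow, smul_mul_assoc, mul_smul_comm, smul_smul, pow_succ, mul_assoc]
  rw [hterm, map_smul, entrySum_mul_of_one_mul, smul_eq_mul]
  ring

end Matrix

theorem stmt15_general (N : ℕ) (R : Type*) [CommRing R]
    (A : Matrix (Fin N) (Fin N) R) (γ : R)
    (B : Matrix (Fin N) (Fin N) R)
    (hB : B = γ • Matrix.of (fun _ _ : Fin N => (1 : R))
      + (1 - γ) • (1 : Matrix (Fin N) (Fin N) R))
    (g : ℕ → R) (hg : ∀ m : ℕ, g m = ∑ i : Fin N, ∑ j : Fin N, (A ^ m) i j)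
    (S : ℕ → R) (hS : ∀ k : ℕ, 1 ≤ k →
      S k = ∑ i : Fin N, ∑ j : Fin N, ((A * B) ^ (k - 1) * A) i j)
    (k : ℕ) (hk : 1 ≤ k) :
    S k = ∑ p ∈ Finset.Icc 1 k, γ ^ (p - 1) * (1 - γ) ^ (k - p) *
      ∑ m ∈ (Finset.Nat.antidiagonalTuple p k).filter (fun m => ∀ i, 1 ≤ m i),
        ∏ i, g (m i) := by
  have hS' (n : ℕ) : S (n + 1) = Matrix.entrySum ((A * B) ^ n * A) := by
    rw [hS _ (Nat.le_add_left 1 n), Nat.add_sub_cancel, Matrix.entrySum_apply]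
  have hg' (m : ℕ) : g m = Matrix.entrySum (A ^ m) := hg m
  have hrec : (fun n => S (n + 1)) = weightedCompositionSum γ (1 - γ) (fun m => g (m + 1)) :=
    eq_of_antidiagonal_recurrence (fun n => (1 - γ) ^ (n + 1) * g (n + 1 + 1))
      (fun i => γ * (1 - γ) ^ i * g (i + 1)) (by simp [hS', hg', weightedCompositionSum_zero])
      (fun n => by simp only [hS', hg', hB, Matrix.entrySum_mul_pow_succ_mul])
      (weightedCompositionSum_succ _ _ _)
  obtain ⟨n, rfl⟩ : ∃ n, k = n + 1 := ⟨k - 1, by omega⟩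
  rw [← weightedCompositionSum_eq_sum_compositions, ← hrec]

/-- Let `R` be a commutative ring, `A` an `N×N` matrix over `R`,
`γ ∈ R`, `B = γ·𝟙𝟙ᵀ + (1−γ)·I`, and for `k ≥ 1` set `S_k := 𝟙ᵀ (A·B)^{k−1} A 𝟙` (the sum
of all entries of `(A·B)^{k−1}·A`) and `g_m := 𝟙ᵀ A^m 𝟙` (the sum of all entries of `A^m`).
Then for every `k ≥ 1`:
`S_k = ∑_{p=1}^{k} γ^{p−1}·(1−γ)^{k−p} · ∑_{(m_1,…,m_p)} ∏_i g_{m_i}`,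
the inner sum ranging over all compositions of `k` into `p` positive parts. -/
theorem stmt15 (N : ℕ) (hN : 0 < N) (R : Type*) [CommRing R]
    (A : Matrix (Fin N) (Fin N) R) (γ : R)
    (B : Matrix (Fin N) (Fin N) R)
    (hB : B = γ • Matrix.of (fun _ _ : Fin N => (1 : R))
      + (1 - γ) • (1 : Matrix (Fin N) (Fin N) R))
    (g : ℕ → R) (hg : ∀ m : ℕ, g m = ∑ i : Fin N, ∑ j : Fin N, (A ^ m) i j)
    (S : ℕ → R) (hS : ∀ k : ℕ, 1 ≤ k →
      S k = ∑ i : Fin N, ∑ j : Fin N, ((A * B) ^ (k - 1) * A) i j)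
    (k : ℕ) (hk : 1 ≤ k) :
    S k = ∑ p ∈ Finset.Icc 1 k, γ ^ (p - 1) * (1 - γ) ^ (k - p) *
      ∑ m ∈ (Finset.Nat.antidiagonalTuple p k).filter (fun m => ∀ i, 1 ≤ m i),
        ∏ i, g (m i) :=
  stmt15_general N R A γ B hB g hg S hS k hk
end

section
/- Let A be an N×N real matrix, γ, z ∈ ℝ, and suppose I − z(1−γ)A is invertible. Set Θ := 𝟙ᵀ (I − z(1−γ)A)⁻¹ A 𝟙 and suppose 1 − zγΘ ≠ 0. Then the matrix I − z·((1−γ)A + γ·(A𝟙)𝟙ᵀ) is invertible and 𝟙ᵀ (I − z·((1−γ)A + γ·(A𝟙)𝟙ᵀ))⁻¹ (z·A𝟙) = zΘ / (1 − zγΘ). -/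
/-!
`I − z((1−γ)A + γ(A𝟙)𝟙ᵀ)` is the rank-one perturbation `B − zγ (A𝟙)𝟙ᵀ` of `B = I − z(1−γ)A`.
By the matrix determinant lemma its determinant is `det B · (1 − zγΘ)`, and since
`(B − c uvᵀ) B⁻¹u = (1 − c vᵀB⁻¹u) u`, its inverse sends `u = A𝟙` to `B⁻¹u / (1 − zγΘ)`
(the Sherman–Morrison formula applied to `u`).
-/

open Matrix

section RankOnePerturbation

variable {n K : Type*} [Fintype n] [DecidableEq n]

theorem det_sub_smul_vecMulVec [CommRing K] {B : Matrix n n K} (hB : IsUnit B) (c : K)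
    (u v : n → K) :
    (B - c • vecMulVec u v).det = B.det * (1 - c * (v ⬝ᵥ B⁻¹ *ᵥ u)) := by
  rw [sub_eq_add_neg, ← neg_smul, ← smul_vecMulVec, vecMulVec_eq Unit,
    det_add_replicateCol_mul_replicateRow ((isUnit_iff_isUnit_det B).mp hB), det_unique (n := Unit),
    Matrix.add_apply, one_apply_eq, Matrix.mul_assoc, ← replicateCol_mulVec,
    replicateRow_mul_replicateCol_apply, mulVec_smul, dotProduct_smul, smul_eq_mul, neg_mul,
    ← sub_eq_add_neg]

theorem isUnit_sub_smul_vecMulVec [CommRing K] {B : Matrix n n K} (hB : IsUnit B) {c : K}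
    {u v : n → K} (h : IsUnit (1 - c * (v ⬝ᵥ B⁻¹ *ᵥ u))) :
    IsUnit (B - c • vecMulVec u v) := by
  rw [isUnit_iff_isUnit_det, det_sub_smul_vecMulVec hB]
  exact ((isUnit_iff_isUnit_det B).mp hB).mul h

theorem sub_smul_vecMulVec_mulVec_inv_mulVec [CommRing K] {B : Matrix n n K} (hB : IsUnit B)
    (c : K) (u v : n → K) :
    (B - c • vecMulVec u v) *ᵥ (B⁻¹ *ᵥ u) = (1 - c * (v ⬝ᵥ B⁻¹ *ᵥ u)) • u := by
  rw [sub_mulVec, mulVec_mulVec, mul_nonsing_inv B ((isUnit_iff_isUnit_det B).mp hB),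
    one_mulVec, smul_mulVec, vecMulVec_mulVec, op_smul_eq_smul, smul_smul, sub_smul, one_smul]

theorem inv_sub_smul_vecMulVec_mulVec [Field K] {B : Matrix n n K} (hB : IsUnit B) {c : K}
    {u v : n → K} (h : 1 - c * (v ⬝ᵥ B⁻¹ *ᵥ u) ≠ 0) :
    (B - c • vecMulVec u v)⁻¹ *ᵥ u = (1 - c * (v ⬝ᵥ B⁻¹ *ᵥ u))⁻¹ • (B⁻¹ *ᵥ u) := by
  obtain ⟨_⟩ := (isUnit_sub_smul_vecMulVec hB h.isUnit).nonempty_invertible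
  refine inv_mulVec_eq_vec ?_
  rw [mulVec_smul, sub_smul_vecMulVec_mulVec_inv_mulVec hB, smul_smul, inv_mul_cancel₀ h,
    one_smul]

end RankOnePerturbation

theorem stmt16_general (N : ℕ)
    (A : Matrix (Fin N) (Fin N) ℝ) (γ z : ℝ)
    (h1 : IsUnit ((1 : Matrix (Fin N) (Fin N) ℝ) - (z * (1 - γ)) • A))
    (Θ : ℝ)
    (hΘ : Θ = ∑ i : Fin N,
      (((1 : Matrix (Fin N) (Fin N) ℝ) - (z * (1 - γ)) • A)⁻¹).mulVec
        (A.mulVec (fun _ => (1 : ℝ))) i)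
    (h2 : 1 - z * γ * Θ ≠ 0) :
    IsUnit ((1 : Matrix (Fin N) (Fin N) ℝ)
        - z • ((1 - γ) • A
          + γ • Matrix.vecMulVec (A.mulVec (fun _ => (1 : ℝ))) (fun _ => (1 : ℝ)))) ∧
    ∑ i : Fin N,
        (((1 : Matrix (Fin N) (Fin N) ℝ)
          - z • ((1 - γ) • A
            + γ • Matrix.vecMulVec (A.mulVec (fun _ => (1 : ℝ))) (fun _ => (1 : ℝ))))⁻¹).mulVec
          (z • A.mulVec (fun _ => (1 : ℝ))) i
      = z * Θ / (1 - z * γ * Θ) := by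
  simp only [← Pi.one_def] at hΘ ⊢
  set B := (1 : Matrix (Fin N) (Fin N) ℝ) - (z * (1 - γ)) • A
  set u := A *ᵥ (1 : Fin N → ℝ)
  have hΘ_dot : Θ = 1 ⬝ᵥ B⁻¹ *ᵥ u := by rw [hΘ, one_dotProduct]
  have hM : 1 - z • ((1 - γ) • A + γ • vecMulVec u 1) = B - (z * γ) • vecMulVec u 1 := by
    rw [smul_add, smul_smul, smul_smul, sub_sub]
  have h2_dot : 1 - z * γ * (1 ⬝ᵥ B⁻¹ *ᵥ u) ≠ 0 := hΘ_dot ▸ h2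
  rw [hM, ← one_dotProduct, mulVec_smul, inv_sub_smul_vecMulVec_mulVec h1 h2_dot, dotProduct_smul,
    dotProduct_smul, ← hΘ_dot, smul_eq_mul, smul_eq_mul]
  exact ⟨isUnit_sub_smul_vecMulVec h1 h2_dot.isUnit, by ring⟩

/-- Let `A` be an `N×N` real matrix, `γ, z ∈ ℝ`, and suppose
`I − z(1−γ)A` is invertible. Set `Θ := 𝟙ᵀ (I − z(1−γ)A)⁻¹ A 𝟙` and suppose
`1 − zγΘ ≠ 0`. Then `I − z·((1−γ)A + γ·(A𝟙)𝟙ᵀ)` is invertible and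
`𝟙ᵀ (I − z·((1−γ)A + γ·(A𝟙)𝟙ᵀ))⁻¹ (z·A𝟙) = zΘ / (1 − zγΘ)`. -/
theorem stmt16 (N : ℕ) (hN : 0 < N)
    (A : Matrix (Fin N) (Fin N) ℝ) (γ z : ℝ)
    (h1 : IsUnit ((1 : Matrix (Fin N) (Fin N) ℝ) - (z * (1 - γ)) • A))
    (Θ : ℝ)
    (hΘ : Θ = ∑ i : Fin N,
      (((1 : Matrix (Fin N) (Fin N) ℝ) - (z * (1 - γ)) • A)⁻¹).mulVec
        (A.mulVec (fun _ => (1 : ℝ))) i)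
    (h2 : 1 - z * γ * Θ ≠ 0) :
    IsUnit ((1 : Matrix (Fin N) (Fin N) ℝ)
        - z • ((1 - γ) • A
          + γ • Matrix.vecMulVec (A.mulVec (fun _ => (1 : ℝ))) (fun _ => (1 : ℝ)))) ∧
    ∑ i : Fin N,
        (((1 : Matrix (Fin N) (Fin N) ℝ)
          - z • ((1 - γ) • A
            + γ • Matrix.vecMulVec (A.mulVec (fun _ => (1 : ℝ))) (fun _ => (1 : ℝ))))⁻¹).mulVec
          (z • A.mulVec (fun _ => (1 : ℝ))) i
      = z * Θ / (1 - z * γ * Θ) :=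
  stmt16_general N A γ z h1 Θ hΘ h2
end

section
/- Let ρ ∈ (0,1) and for x ∈ (0,1), α ∈ [0, min(x, 1−x)] define ψ(x, α; ρ) := x·H(α/x) + (1−x)·H(α/(1−x)) + α·log ρ. Then Λ(ρ) := 2·max_{0 ≤ α ≤ 1/2} ψ(1/2, α; ρ) = 2·log(1 + √ρ). -/
/-!
With `s = √ρ` we have `ψ(1/2, α; ρ) = H(2α) + 2α·log s`, so it suffices to maximise
`H(u) + u·log s` over `u ∈ [0, 1]`. Writing it as `u·log(s/u) + (1-u)·log(1/(1-u))`,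
concavity of `log` bounds it by `log(u·(s/u) + (1-u)·(1/(1-u))) = log(1 + s)`, with equality
when `s/u = 1/(1-u)`, i.e. at `u = s/(1+s)`.
-/

open Real Set

lemma binEntropy_add_mul_log_le {s u : ℝ} (hs : 0 < s) (hu : u ∈ Icc (0 : ℝ) 1) :
    binEntropy u + u * log s ≤ log (1 + s) := by
  obtain ⟨hu0, hu1⟩ := hu
  rcases hu0.eq_or_lt with rfl | hu0
  · simpa using log_nonneg (by linarith)
  rcases hu1.eq_or_lt with rfl | hu1
  · simpa using log_le_log hs (by linarith)
  have h1u : 0 < 1 - u := by linarith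
  have hjensen := strictConcaveOn_log_Ioi.concaveOn.2 (mem_Ioi.2 (div_pos hs hu0))
    (mem_Ioi.2 (inv_pos.2 h1u)) hu0.le h1u.le (by ring)
  have hmean : u • (s / u) + (1 - u) • (1 - u)⁻¹ = 1 + s := by
    simp only [smul_eq_mul]
    field_simp
    ring
  rw [hmean, smul_eq_mul, smul_eq_mul, log_div hs.ne' hu0.ne'] at hjensen
  rw [binEntropy, log_inv]
  linarith

lemma binEntropy_div_one_add_add_mul_log {s : ℝ} (hs : 0 < s) :
    binEntropy (s / (1 + s)) + s / (1 + s) * log s = log (1 + s) := by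
  have h1s : 0 < 1 + s := by linarith
  have hcompl : 1 - s / (1 + s) = (1 + s)⁻¹ := by
    field_simp
    ring
  rw [binEntropy, hcompl, inv_inv, inv_div, log_div h1s.ne' hs.ne']
  field_simp
  ring

theorem stmt18_general (ρ : ℝ) (hρ0 : 0 < ρ)
    (H : ℝ → ℝ)
    (hH : ∀ u : ℝ, H u = -u * Real.log u - (1 - u) * Real.log (1 - u))
    (ψ : ℝ → ℝ → ℝ)
    (hψ : ∀ x α : ℝ, ψ x α
      = x * H (α / x) + (1 - x) * H (α / (1 - x)) + α * Real.log ρ) :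
    IsGreatest (ψ (1 / 2) '' Set.Icc (0 : ℝ) (1 / 2)) (Real.log (1 + Real.sqrt ρ)) ∧
    2 * sSup (ψ (1 / 2) '' Set.Icc (0 : ℝ) (1 / 2)) = 2 * Real.log (1 + Real.sqrt ρ) := by
  set s := √ρ
  have hs : 0 < s := sqrt_pos.2 hρ0
  have hH_eq : H = binEntropy := funext fun u => by
    rw [hH, binEntropy, log_inv, log_inv]
    ring
  have hψ_half (α : ℝ) : ψ (1 / 2) α = binEntropy (2 * α) + 2 * α * log s := by
    rw [hψ, hH_eq, show ρ = s ^ 2 from (sq_sqrt hρ0.le).symm, log_pow]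
    norm_num [div_eq_mul_inv]
    ring_nf
  have hmax : IsGreatest (ψ (1 / 2) '' Icc 0 (1 / 2)) (log (1 + s)) := by
    refine ⟨⟨s / (1 + s) / 2, ⟨by positivity, ?_⟩, ?_⟩, ?_⟩
    · rw [div_le_div_iff_of_pos_right two_pos, div_le_one (by positivity)]
      linarith
    · rw [hψ_half, mul_div_cancel₀ _ two_ne_zero, binEntropy_div_one_add_add_mul_log hs]
    · rintro _ ⟨α, ⟨hα0, hα1⟩, rfl⟩
      rw [hψ_half]
      exact binEntropy_add_mul_log_le hs ⟨by linarith, by linarith⟩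
  exact ⟨hmax, by rw [hmax.csSup_eq]⟩

/-- Let `ρ ∈ (0,1)` and define
`ψ(x, α; ρ) := x·H(α/x) + (1−x)·H(α/(1−x)) + α·log ρ`. Then the maximum of
`ψ(1/2, ·; ρ)` over `α ∈ [0, 1/2]` equals `log(1 + √ρ)`, i.e.
`Λ(ρ) := 2·max_{0 ≤ α ≤ 1/2} ψ(1/2, α; ρ) = 2·log(1 + √ρ)`. -/
theorem stmt18 (ρ : ℝ) (hρ0 : 0 < ρ) (hρ1 : ρ < 1)
    (H : ℝ → ℝ)
    (hH : ∀ u : ℝ, H u = -u * Real.log u - (1 - u) * Real.log (1 - u))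
    (ψ : ℝ → ℝ → ℝ)
    (hψ : ∀ x α : ℝ, ψ x α
      = x * H (α / x) + (1 - x) * H (α / (1 - x)) + α * Real.log ρ) :
    IsGreatest (ψ (1 / 2) '' Set.Icc (0 : ℝ) (1 / 2)) (Real.log (1 + Real.sqrt ρ)) ∧
    2 * sSup (ψ (1 / 2) '' Set.Icc (0 : ℝ) (1 / 2)) = 2 * Real.log (1 + Real.sqrt ρ) :=
  stmt18_general ρ hρ0 H hH ψ hψ
end
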